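/- arXiv:2407.10530 — 3 statements merged into one kernel-verified Lean document; each statement's English description precedes it below -/
import Mathlib

section
/- (Doblin–Harris coupling contraction) Let S_T be a positive linear map on a Banach lattice X, φ₁ a positive linear functional with S_T* φ₁ = φ₁, and [f]_{φ₁} := ⟨φ₁, |f|⟩. Suppose there exist g ∈ X₊ and c > 0 such that S_T f ≥ c g [f]_{φ₁} for every f ∈ X₊ belonging to a class 𝒞 closed under f ↦ f₊, f₋. Then for every f ∈ 𝒞 with ⟨φ₁, f⟩ = 0 (and f₊, f₋ ∈ 𝒞), one has [S_T f]_{φ₁} ≤ (1 - c⟨φ₁, g⟩) [f]_{φ₁}. -/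
/-- Doblin–Harris coupling contraction: let `S` be a positive linear map on a Banach
lattice `X`, `φ₁` a positive linear functional fixed by the adjoint of `S`, and
`[f]_{φ₁} := φ₁ |f|`. If there are `g ∈ X₊`, `c > 0` with `S f ≥ c [f]_{φ₁} • g` for every
nonnegative `f` in a class `𝒞` closed under positive and negative parts, then for every
`f ∈ 𝒞` with `φ₁ f = 0`, one has `[S f]_{φ₁} ≤ (1 - c ⟨φ₁, g⟩)[f]_{φ₁}`. -/
theorem doblin_harris_coupling_contraction {X : Type*}
    [NormedAddCommGroup X] [Lattice X] [HasSolidNorm X] [IsOrderedAddMonoid X]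
    [NormedSpace ℝ X]
    (S : X →ₗ[ℝ] X) (hSpos : ∀ f : X, 0 ≤ f → 0 ≤ S f)
    (φ₁ : X →ₗ[ℝ] ℝ) (hφpos : ∀ f : X, 0 ≤ f → 0 ≤ φ₁ f)
    (hφfix : ∀ f : X, φ₁ (S f) = φ₁ f)
    (g : X) (hg : 0 ≤ g) (c : ℝ) (hc : 0 < c)
    (C : Set X) (hCpos : ∀ f ∈ C, (f ⊔ 0) ∈ C ∧ ((-f) ⊔ 0) ∈ C)
    (hDH : ∀ f ∈ C, 0 ≤ f → (c * φ₁ |f|) • g ≤ S f) :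
    ∀ f ∈ C, φ₁ f = 0 → φ₁ |S f| ≤ (1 - c * φ₁ g) * φ₁ |f| := by
  intro f hf hφf
  -- monotonicity of φ₁
  have hφmono : ∀ a b : X, a ≤ b → φ₁ a ≤ φ₁ b := by
    intro a b hab
    have := hφpos (b - a) (sub_nonneg.2 hab)
    simpa [map_sub, sub_nonneg] using this
  set p : X := f ⊔ 0 with hp
  set n : X := (-f) ⊔ 0 with hn
  have hp0 : 0 ≤ p := le_sup_right
  have hn0 : 0 ≤ n := le_sup_right
  have hpC : p ∈ C := (hCpos f hf).1
  have hnC : n ∈ C := (hCpos f hf).2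
  have hpn_sub : p - n = f := posPart_sub_negPart f
  have hpn_add : p + n = |f| := posPart_add_negPart f
  -- φ₁ p = φ₁ n, and 2 φ₁ p = φ₁ |f|
  have hsub : φ₁ p - φ₁ n = 0 := by
    rw [← map_sub, hpn_sub, hφf]
  have hadd : φ₁ p + φ₁ n = φ₁ |f| := by
    rw [← map_add, hpn_add]
  have hpe : φ₁ p = φ₁ n := by linarith
  -- DH bounds
  have hDHp : (c * φ₁ p) • g ≤ S p := by
    have := hDH p hpC hp0
    rwa [abs_of_nonneg hp0] at this
  have hDHn : (c * φ₁ p) • g ≤ S n := by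
    have := hDH n hnC hn0
    rwa [abs_of_nonneg hn0, ← hpe] at this
  have hinf : (c * φ₁ p) • g ≤ S p ⊓ S n := le_inf hDHp hDHn
  -- key lattice inequality: |S f| ≤ S p + S n - 2 (S p ⊓ S n)
  have hSf : S f = S p - S n := by rw [← map_sub, hpn_sub]
  have hkey : |S f| ≤ S p + S n - 2 • (S p ⊓ S n) := by
    rw [hSf]
    refine abs_le'.2 ⟨?_, ?_⟩
    · have h1 : S p ⊓ S n ≤ S n := inf_le_right
      have h2 : (2 : ℕ) • (S p ⊓ S n) ≤ 2 • S n := nsmul_le_nsmul_right h1 2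
      simp only [two_smul] at h2 ⊢
      calc S p - S n = S p + S n - (S n + S n) := by abel
        _ ≤ S p + S n - (S p ⊓ S n + S p ⊓ S n) := sub_le_sub_left h2 _
    · have h1 : S p ⊓ S n ≤ S p := inf_le_left
      have h2 : (2 : ℕ) • (S p ⊓ S n) ≤ 2 • S p := nsmul_le_nsmul_right h1 2
      simp only [two_smul] at h2 ⊢
      calc -(S p - S n) = S p + S n - (S p + S p) := by abel
        _ ≤ S p + S n - (S p ⊓ S n + S p ⊓ S n) := sub_le_sub_left h2 _
  -- apply φ₁
  have h1 : φ₁ |S f| ≤ φ₁ (S p) + φ₁ (S n) - 2 * φ₁ (S p ⊓ S n) := by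
    have := hφmono _ _ hkey
    rw [map_sub, map_add] at this
    rw [two_smul, map_add] at this
    linarith
  have h2 : c * φ₁ p * φ₁ g ≤ φ₁ (S p ⊓ S n) := by
    have := hφmono _ _ hinf
    rwa [map_smul, smul_eq_mul] at this
  have h3 : φ₁ (S p) = φ₁ p := hφfix p
  have h4 : φ₁ (S n) = φ₁ n := hφfix n
  have h5 : φ₁ p = φ₁ |f| / 2 := by linarith
  have h6 : φ₁ |S f| ≤ φ₁ p + φ₁ n - 2 * (c * φ₁ p * φ₁ g) := by
    rw [h3, h4] at h1; linarith
  have h7 : 2 * (c * φ₁ p * φ₁ g) = c * φ₁ g * φ₁ |f| := by rw [h5]; ring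
  linarith
end

section
/- (Contraction under alternative Lyapunov/coupling regimes) Let ‖·‖₁ be a norm and [·]_{φ₁} ≤ ‖·‖₁ a seminorm on a vector space X, and T : X → X linear with [Tf]_{φ₁} ≤ [f]_{φ₁} for all f. Suppose there are constants γ_L, γ_H ∈ (0,1), K > 0, and A > K/(1-γ_L) such that for all f in a subspace N: (i) ‖Tf‖₁ ≤ γ_L‖f‖₁ + K[f]_{φ₁}; (ii) if ‖f‖₁ < A[f]_{φ₁} then [Tf]_{φ₁} ≤ γ_H [f]_{φ₁}. Then there exist β > 0 and γ ∈ (0,1) such that, with |||f||| := [f]_{φ₁} + β‖f‖₁, one has |||Tf||| ≤ γ |||f||| for all f ∈ N. -/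
/-- Contraction under alternative Lyapunov/coupling regimes: with a seminorm
`[·]_{φ₁} ≤ ‖·‖₁`, a linear `T` with `[Tf]_{φ₁} ≤ [f]_{φ₁}`, constants
`γ_L, γ_H ∈ (0,1)`, `K > 0`, `A > K/(1-γ_L)`, a Lyapunov inequality (i) and a conditional
coupling estimate (ii) on a subspace `N`, there exist `β > 0` and `γ ∈ (0,1)` such that
`|||Tf||| ≤ γ |||f|||` for all `f ∈ N`, where `|||f||| := [f]_{φ₁} + β‖f‖₁`. -/
theorem harris_contraction_from_alternatives {X : Type*} [NormedAddCommGroup X]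
    [NormedSpace ℝ X]
    (J : X → ℝ) (hJnn : ∀ f, 0 ≤ J f) (hJle : ∀ f, J f ≤ ‖f‖)
    (T : X →ₗ[ℝ] X) (hJT : ∀ f : X, J (T f) ≤ J f)
    (N : Submodule ℝ X) (hTN : ∀ f ∈ N, T f ∈ N)
    (γL γH K A : ℝ) (hγL : γL ∈ Set.Ioo (0:ℝ) 1) (hγH : γH ∈ Set.Ioo (0:ℝ) 1)
    (hK : 0 < K) (hA : K / (1 - γL) < A)
    (hLyap : ∀ f ∈ N, ‖T f‖ ≤ γL * ‖f‖ + K * J f)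
    (hCoupling : ∀ f ∈ N, ‖f‖ < A * J f → J (T f) ≤ γH * J f) :
    ∃ β > (0:ℝ), ∃ γ ∈ Set.Ioo (0:ℝ) 1, ∀ f ∈ N,
      J (T f) + β * ‖T f‖ ≤ γ * (J f + β * ‖f‖) := by
  obtain ⟨hγL0, hγL1⟩ := hγL
  obtain ⟨hγH0, hγH1⟩ := hγH
  have hA0 : 0 < A := lt_trans (div_pos hK (by linarith)) hA
  obtain ⟨β, hβ⟩ : ∃ b : ℝ, b = (1 - γH) / (2 * K) := ⟨_, rfl⟩
  have hβ0 : 0 < β := hβ ▸ div_pos (by linarith) (by linarith)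
  obtain ⟨c, hcdef⟩ : ∃ c : ℝ, c = γL + K / A := ⟨_, rfl⟩
  have hc1 : c < 1 := by
    rw [div_lt_iff₀ (by linarith : (0:ℝ) < 1 - γL)] at hA
    have : K / A < 1 - γL := by rw [div_lt_iff₀ hA0]; nlinarith
    rw [hcdef]; linarith
  have hc0 : 0 < c := by
    have : 0 < K / A := div_pos hK hA0
    rw [hcdef]; linarith
  obtain ⟨ε, hε⟩ : ∃ e : ℝ, e = β * A * (1 - c) / 2 := ⟨_, rfl⟩
  have hε0 : 0 < ε := by
    have h1c : (0:ℝ) < 1 - c := by linarith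
    rw [hε]; positivity
  obtain ⟨γ, hγdef⟩ : ∃ g : ℝ,
      g = max (max ((1 + γH) / 2) γL) (max (1 - ε) ((1 + c) / 2)) := ⟨_, rfl⟩
  have hg1 : (1 + γH) / 2 ≤ γ := hγdef ▸ le_trans (le_max_left _ _) (le_max_left _ _)
  have hg2 : γL ≤ γ := hγdef ▸ le_trans (le_max_right _ _) (le_max_left _ _)
  have hg3 : 1 - ε ≤ γ := hγdef ▸ le_trans (le_max_left _ _) (le_max_right _ _)
  have hg4 : (1 + c) / 2 ≤ γ := hγdef ▸ le_trans (le_max_right _ _) (le_max_right _ _)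
  have hγ1 : γ < 1 := by
    rw [hγdef]
    exact max_lt (max_lt (by linarith) hγL1) (max_lt (by linarith) (by linarith))
  refine ⟨β, hβ0, γ, ⟨lt_of_lt_of_le hγL0 hg2, hγ1⟩, ?_⟩
  intro f hf
  have h1 := hLyap f hf
  have hJf := hJnn f
  have hJTf := hJnn (T f)
  have hnf := norm_nonneg f
  have hnTf := norm_nonneg (T f)
  by_cases hcase : ‖f‖ < A * J f
  · have h2 := hCoupling f hf hcase
    have hgH : γH + β * K ≤ γ := by
      have heq : γH + β * K = (1 + γH) / 2 := by rw [hβ]; field_simp; ring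
      linarith
    nlinarith [mul_nonneg (sub_nonneg.2 hgH) hJf,
      mul_nonneg (mul_nonneg hβ0.le (sub_nonneg.2 hg2)) hnf]
  · push_neg at hcase
    have hJA : J f ≤ ‖f‖ / A := (le_div_iff₀ hA0).2 (by linarith)
    have hJT2 := hJT f
    have keyalg : ε / A + β * K / A + β * γL = β * (1 + c) / 2 := by
      rw [hε, hcdef]; field_simp; ring
    have hεβK : (0:ℝ) ≤ ε + β * K := by positivity
    have step1 : (1 + β * K) * J f ≤ (1 - ε) * J f + (ε + β * K) * (‖f‖ / A) := by
      linarith [mul_le_mul_of_nonneg_left hJA hεβK]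
    have step2 : J (T f) + β * ‖T f‖ ≤ (1 + β * K) * J f + β * γL * ‖f‖ := by
      linarith [mul_le_mul_of_nonneg_left h1 hβ0.le]
    have hdiv : (ε + β * K) * (‖f‖ / A) = (ε / A + β * K / A) * ‖f‖ := by
      field_simp
    have p1 : (1 - ε) * J f ≤ γ * J f := mul_le_mul_of_nonneg_right hg3 hJf
    have hbg : β * (1 + c) / 2 ≤ γ * β := by
      linarith [mul_le_mul_of_nonneg_left hg4 hβ0.le]
    have p2 : (β * (1 + c) / 2) * ‖f‖ ≤ (γ * β) * ‖f‖ :=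
      mul_le_mul_of_nonneg_right hbg hnf
    have h5 : (ε / A + β * K / A) * ‖f‖ + β * γL * ‖f‖ = (β * (1 + c) / 2) * ‖f‖ := by
      rw [← keyalg]; ring
    have step3 : (1 - ε) * J f + (ε + β * K) * (‖f‖ / A) + β * γL * ‖f‖
        ≤ γ * J f + γ * (β * ‖f‖) := by
      rw [hdiv]; linarith
    linarith
end

section
/- (Strong maximum principle from Doblin–Harris positivity) Let S be a positive C₀-semigroup on a Banach lattice X with generator L, and suppose there exist g ∈ X₊ \ {0}, a positive functional ψ, and T₁ > 0, η_{t} > 0 such that S_t f ≥ η_t g ⟨ψ, f⟩ for all f ∈ X₊ and t ≥ T₁. If f ∈ D(L) ∩ X₊ satisfies ⟨ψ, f⟩ > 0 and (μ - L)f ≥ 0 for some μ ∈ ℝ, then for any ν > max(μ, ω(S)) (ω(S) the growth bound) one has f ≥ (ν - μ) (∫_{T₁}^∞ e^{-νt} η_t dt) ⟨ψ, f⟩ g; in particular f ≥ α g for some α > 0. -/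
open MeasureTheory Set Filter

section Helpers

variable {X : Type*} [NormedAddCommGroup X] [Lattice X] [HasSolidNorm X] [IsOrderedAddMonoid X]
    [NormedSpace ℝ X]

lemma dh_two_nsmul_semiclosed {a : X} (h : 0 ≤ 2 • a) : 0 ≤ a := by
  suffices this : (a ⊓ 0) + (a ⊓ 0) = a ⊓ 0 by
    exact inf_eq_right.mp (add_eq_right.mp this)
  rw [add_inf, inf_add, add_zero, zero_add, inf_assoc, inf_left_idem, inf_comm,
    inf_assoc]
  rw [two_nsmul] at h
  rw [inf_of_le_left h]

lemma dh_smul_nonneg {r : ℝ} {x : X} (hr : 0 ≤ r) (hx : 0 ≤ x) : 0 ≤ r • x := by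
  have hnat : ∀ n : ℕ, 0 ≤ (n : ℝ) • x := by
    intro n
    induction n with
    | zero => simp
    | succ n ih =>
      push_cast
      rw [add_smul, one_smul]
      exact add_nonneg ih hx
  have hdyadic : ∀ k : ℕ, ∀ m : ℕ, 0 ≤ ((m : ℝ) / 2 ^ k) • x := by
    intro k
    induction k with
    | zero => intro m; simpa using hnat m
    | succ k ih =>
      intro m
      apply dh_two_nsmul_semiclosed
      have h2 : (2 : ℕ) • (((m : ℝ) / 2 ^ (k + 1)) • x) = ((m : ℝ) / 2 ^ k) • x := by
        rw [← Nat.cast_smul_eq_nsmul ℝ, smul_smul]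
        congr 1
        push_cast
        ring
      rw [h2]
      exact ih m
  have hclosed : IsClosed {r : ℝ | 0 ≤ r • x} := by
    have : {r : ℝ | 0 ≤ r • x} = (fun r : ℝ => r • x) ⁻¹' (Set.Ici 0) := rfl
    rw [this]
    exact isClosed_Ici.preimage (continuous_id.smul continuous_const)
  have htend : Tendsto (fun k : ℕ => (⌊r * 2 ^ k⌋₊ : ℝ) / 2 ^ k) atTop (nhds r) := by
    have hup : ∀ k : ℕ, (⌊r * 2 ^ k⌋₊ : ℝ) / 2 ^ k ≤ r := by
      intro k
      rw [div_le_iff₀ (by positivity)]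
      exact Nat.floor_le (by positivity)
    have hlow : ∀ k : ℕ, r - (1 / 2 : ℝ) ^ k ≤ (⌊r * 2 ^ k⌋₊ : ℝ) / 2 ^ k := by
      intro k
      have hk : (0:ℝ) < 2 ^ k := by positivity
      rw [sub_le_iff_le_add]
      have heq : (⌊r * 2 ^ k⌋₊ : ℝ) / 2 ^ k + (1 / 2 : ℝ) ^ k
          = ((⌊r * 2 ^ k⌋₊ : ℝ) + 1) / 2 ^ k := by
        rw [div_pow, one_pow]; ring
      rw [heq, le_div_iff₀ hk]
      exact (Nat.lt_floor_add_one (r * 2 ^ k)).le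
    have hl : Tendsto (fun k : ℕ => r - (1 / 2 : ℝ) ^ k) atTop (nhds r) := by
      have := tendsto_pow_atTop_nhds_zero_of_lt_one (show (0:ℝ) ≤ 1/2 by norm_num)
        (show (1/2:ℝ) < 1 by norm_num)
      simpa using tendsto_const_nhds.sub this
    exact tendsto_of_tendsto_of_tendsto_of_le_of_le hl tendsto_const_nhds hlow hup
  exact hclosed.mem_of_tendsto htend (Filter.Eventually.of_forall fun k => hdyadic k _)

lemma dh_smul_le_smul {r : ℝ} (hr : 0 ≤ r) {a b : X} (h : a ≤ b) : r • a ≤ r • b := by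
  have := dh_smul_nonneg hr (sub_nonneg.2 h)
  rw [smul_sub] at this
  exact sub_nonneg.1 this

variable [CompleteSpace X]

lemma dh_integral_nonneg {α : Type*} [MeasurableSpace α] {μ : Measure α} [SigmaFinite μ]
    {F : α → X} (hFi : Integrable F μ) (hF : 0 ≤ᵐ[μ] F) : 0 ≤ ∫ a, F a ∂μ := by
  have hconv : Convex ℝ {x : X | 0 ≤ x} := fun x hx y hy a b ha hb _ =>
    add_nonneg (dh_smul_nonneg ha hx) (dh_smul_nonneg hb hy)
  have hcl : IsClosed {x : X | 0 ≤ x} := by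
    have : {x : X | 0 ≤ x} = Set.Ici (0 : X) := rfl
    rw [this]; exact isClosed_Ici
  have key : ∀ n, 0 ≤ ∫ a in spanningSets μ n, F a ∂μ := by
    intro n
    by_cases h0 : μ (spanningSets μ n) = 0
    · rw [Measure.restrict_eq_zero.mpr h0, integral_zero_measure]
    · have hmem : ∀ᵐ a ∂μ.restrict (spanningSets μ n), F a ∈ {x : X | 0 ≤ x} :=
        ae_restrict_of_ae hF
      have havg := hconv.set_average_mem hcl h0 (measure_spanningSets_lt_top μ n).ne
        hmem hFi.integrableOn
      have heq : ∫ a in spanningSets μ n, F a ∂μ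
          = (μ (spanningSets μ n)).toReal • ⨍ a in spanningSets μ n, F a ∂μ := by
        rw [setAverage_eq, smul_smul, ← measureReal_def, mul_inv_cancel₀, one_smul]
        exact ENNReal.toReal_ne_zero.mpr ⟨h0, (measure_spanningSets_lt_top μ n).ne⟩
      rw [heq]
      exact dh_smul_nonneg ENNReal.toReal_nonneg havg
  have htend := tendsto_setIntegral_of_monotone (fun n => measurableSet_spanningSets μ n)
    (monotone_spanningSets μ) (by rw [iUnion_spanningSets]; exact hFi.integrableOn)
  rw [iUnion_spanningSets, MeasureTheory.setIntegral_univ] at htend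
  exact ge_of_tendsto' htend key

lemma dh_setIntegral_nonneg {s : Set ℝ} (hs : MeasurableSet s) {F : ℝ → X}
    (hFi : IntegrableOn F s) (hF : ∀ t ∈ s, 0 ≤ F t) : 0 ≤ ∫ t in s, F t := by
  exact dh_integral_nonneg hFi ((ae_restrict_iff' hs).mpr (Filter.Eventually.of_forall hF))

lemma dh_setIntegral_mono {s : Set ℝ} (hs : MeasurableSet s) {F G : ℝ → X}
    (hFi : IntegrableOn F s) (hGi : IntegrableOn G s) (hFG : ∀ t ∈ s, F t ≤ G t) :
    ∫ t in s, F t ≤ ∫ t in s, G t := by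
  have h0 : 0 ≤ ∫ t in s, (G t - F t) :=
    dh_setIntegral_nonneg hs (hGi.sub hFi) fun t ht => sub_nonneg.2 (hFG t ht)
  rwa [integral_sub hGi hFi, sub_nonneg] at h0

end Helpers

set_option maxHeartbeats 1000000 in
/-- Strong maximum principle from Doblin–Harris positivity: let `S` be a positive
semigroup on a Banach lattice satisfying the Doblin–Harris lower bound
`S_t u ≥ η_t ⟨ψ, u⟩ g` for `t ≥ T₁` and `u ≥ 0`. If `f ≥ 0` satisfies `⟨ψ, f⟩ > 0` and
`(μ - L) f = h ≥ 0`, so that the resolvent formula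
`f = ∫₀^∞ e^{-νt} S_t ((ν-μ) f + h) dt` holds for `ν > max(μ, ω(S))`, then
`f ≥ (ν-μ) (∫_{T₁}^∞ e^{-νt} η_t dt) ⟨ψ, f⟩ g`; in particular `f ≥ α g` for some
`α > 0`. -/
theorem strong_maximum_principle_from_doblin_harris {X : Type*}
    [NormedAddCommGroup X] [Lattice X] [HasSolidNorm X] [IsOrderedAddMonoid X]
    [NormedSpace ℝ X] [CompleteSpace X]
    (S : ℝ → X →L[ℝ] X) (hSpos : ∀ t : ℝ, 0 ≤ t → ∀ u : X, 0 ≤ u → 0 ≤ S t u)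
    (ψ : X →L[ℝ] ℝ) (hψpos : ∀ u : X, 0 ≤ u → 0 ≤ ψ u)
    (g : X) (hg : 0 ≤ g) (hgne : g ≠ 0)
    (T₁ : ℝ) (hT₁ : 0 < T₁) (η : ℝ → ℝ) (hη : ∀ t, T₁ ≤ t → 0 < η t)
    (hDH : ∀ t : ℝ, T₁ ≤ t → ∀ u : X, 0 ≤ u → (η t * ψ u) • g ≤ S t u)
    (f h : X) (hf : 0 ≤ f) (hh : 0 ≤ h) (hψf : 0 < ψ f)
    (μ ν : ℝ) (hνμ : μ < ν)
    (hηint : IntegrableOn (fun t => Real.exp (-ν * t) * η t) (Set.Ioi T₁))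
    (hres : f = ∫ t in Set.Ioi (0:ℝ), Real.exp (-ν * t) • S t ((ν - μ) • f + h))
    (hSfint : Integrable (fun t => Real.exp (-ν * t) • S t f)
      (volume.restrict (Set.Ioi (0:ℝ)))) :
    (((ν - μ) * (∫ t in Set.Ioi T₁, Real.exp (-ν * t) * η t) * ψ f) • g ≤ f) ∧
      ∃ α > (0:ℝ), α • g ≤ f := by
  set I : ℝ := ∫ t in Set.Ioi T₁, Real.exp (-ν * t) * η t with hI
  have hc : 0 < ν - μ := sub_pos.2 hνμ
  set c : ℝ := ν - μ with hcdef
  set A : ℝ → X := fun t => c • (Real.exp (-ν * t) • S t f) with hA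
  set B : ℝ → X := fun t => Real.exp (-ν * t) • S t h with hB
  have hAint : Integrable A (volume.restrict (Set.Ioi (0:ℝ))) := hSfint.smul c
  have hAOn : IntegrableOn A (Set.Ioi (0:ℝ)) volume := hAint
  have hAOn1 : IntegrableOn A (Set.Ioc 0 T₁) volume := hAOn.mono_set Set.Ioc_subset_Ioi_self
  have hAOn2 : IntegrableOn A (Set.Ioi T₁) volume := hAOn.mono_set (Set.Ioi_subset_Ioi hT₁.le)
  have hFeq : ∀ t : ℝ, Real.exp (-ν * t) • S t ((ν - μ) • f + h) = A t + B t := by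
    intro t
    simp only [hA, hB, map_add, ContinuousLinearMap.map_smul, smul_add, ← hcdef]
    rw [smul_comm]
  by_cases hFint : Integrable (fun t => Real.exp (-ν * t) • S t ((ν - μ) • f + h))
      (volume.restrict (Set.Ioi (0:ℝ)))
  swap
  · exfalso
    rw [integral_undef hFint] at hres
    rw [hres] at hψf
    simp at hψf
  have hBint : Integrable B (volume.restrict (Set.Ioi (0:ℝ))) := by
    refine (hFint.sub hAint).congr (Filter.Eventually.of_forall fun t => ?_)
    simp only [Pi.sub_apply]
    rw [hFeq t]; abel
  have hIpos : 0 < I := by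
    rw [hI, MeasureTheory.setIntegral_pos_iff_support_of_nonneg_ae]
    · refine lt_of_lt_of_le ?_ (measure_mono (show Set.Ioi T₁ ⊆
        Function.support (fun t => Real.exp (-ν * t) * η t) ∩ Set.Ioi T₁ from
        fun t ht => ⟨(mul_pos (Real.exp_pos _) (hη t (le_of_lt ht))).ne', ht⟩))
      rw [Real.volume_Ioi]
      simp
    · exact (ae_restrict_iff' measurableSet_Ioi).mpr (Filter.Eventually.of_forall
        fun t ht => (mul_pos (Real.exp_pos _) (hη t (le_of_lt ht))).le)
    · exact hηint
  set G : ℝ → X := fun t => ((Real.exp (-ν * t) * η t) * (c * ψ f)) • g with hG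
  have hGint : IntegrableOn G (Set.Ioi T₁) := (hηint.mul_const _).smul_const g
  have key : ((c * I * ψ f) • g : X) ≤ f := by
    have h1 : (∫ t in Set.Ioi (0:ℝ), Real.exp (-ν * t) • S t ((ν - μ) • f + h))
        = (∫ t in Set.Ioi (0:ℝ), A t) + ∫ t in Set.Ioi (0:ℝ), B t := by
      rw [← integral_add hAint hBint]
      exact integral_congr_ae (Filter.Eventually.of_forall hFeq)
    have hfe : f = (∫ t in Set.Ioi (0:ℝ), A t) + ∫ t in Set.Ioi (0:ℝ), B t := by
      rw [hres]; exact h1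
    have h2 : 0 ≤ ∫ t in Set.Ioi (0:ℝ), B t :=
      dh_setIntegral_nonneg measurableSet_Ioi hBint fun t ht =>
        dh_smul_nonneg (Real.exp_pos _).le (hSpos t (le_of_lt ht) h hh)
    have h3 : (∫ t in Set.Ioi (0:ℝ), A t)
        = (∫ t in Set.Ioc 0 T₁, A t) + ∫ t in Set.Ioi T₁, A t := by
      have hu := MeasureTheory.setIntegral_union (μ := volume) (f := A)
        (Set.Ioc_disjoint_Ioi (le_refl T₁)) measurableSet_Ioi hAOn1 hAOn2
      rw [Set.Ioc_union_Ioi_eq_Ioi hT₁.le] at hu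
      exact hu
    have h4 : 0 ≤ ∫ t in Set.Ioc 0 T₁, A t :=
      dh_setIntegral_nonneg measurableSet_Ioc hAOn1
        fun t ht => dh_smul_nonneg hc.le
          (dh_smul_nonneg (Real.exp_pos _).le (hSpos t ht.1.le f hf))
    have h5 : (∫ t in Set.Ioi T₁, G t) ≤ ∫ t in Set.Ioi T₁, A t := by
      refine dh_setIntegral_mono measurableSet_Ioi hGint
        hAOn2 fun t ht => ?_
      have hco : Real.exp (-ν * t) * η t * (c * ψ f)
          = c * Real.exp (-ν * t) * (η t * ψ f) := by ring
      calc G t = (c * Real.exp (-ν * t) * (η t * ψ f)) • g := by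
            simp only [hG]
            rw [hco]
        _ = c • (Real.exp (-ν * t) • ((η t * ψ f) • g)) := by
            rw [smul_smul, smul_smul]
        _ ≤ c • (Real.exp (-ν * t) • S t f) :=
            dh_smul_le_smul hc.le
              (dh_smul_le_smul (Real.exp_pos _).le (hDH t (le_of_lt ht) f hf))
        _ = A t := rfl
    have h6 : (∫ t in Set.Ioi T₁, G t) = (c * I * ψ f) • g := by
      simp only [hG]
      rw [integral_smul_const]
      congr 1
      rw [MeasureTheory.integral_mul_const, ← hI]
      ring
    calc (c * I * ψ f) • g = ∫ t in Set.Ioi T₁, G t := h6.symm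
      _ ≤ ∫ t in Set.Ioi T₁, A t := h5
      _ ≤ ∫ t in Set.Ioi (0:ℝ), A t := by rw [h3]; exact le_add_of_nonneg_left h4
      _ ≤ (∫ t in Set.Ioi (0:ℝ), A t) + ∫ t in Set.Ioi (0:ℝ), B t := le_add_of_nonneg_right h2
      _ = f := hfe.symm
  exact ⟨key, ⟨c * I * ψ f, mul_pos (mul_pos hc hIpos) hψf, key⟩⟩
end
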